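/- If G is a claw-induced-saturated graph in which every vertex in the closed neighborhood of some vertex v has degree exactly 4, then the subgraph of G induced by N(v) is isomorphic to either 2K_2 or P_4. -/

import Mathlib

open SimpleGraph

/-- `G` contains an induced copy of `H`. -/
def HasInducedCopy {W V : Type*} (H : SimpleGraph W) (G : SimpleGraph V) : Prop :=
  Nonempty (H ↪g G)

/-- `G` is `H`-induced-saturated: `G` has no induced copy of `H`, but deleting any edge
or adding any non-edge creates an induced copy of `H`. -/
def IsIndSat {V W : Type*} (G : SimpleGraph V) (H : SimpleGraph W) : Prop :=
  ¬ HasInducedCopy H G ∧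
  (∀ u v : V, G.Adj u v → HasInducedCopy H (G.deleteEdges {s(u, v)})) ∧
  (∀ u v : V, u ≠ v → ¬ G.Adj u v →
    HasInducedCopy H (G ⊔ SimpleGraph.fromEdgeSet {s(u, v)}))

/-- The claw `K_{1,3}`: star with center `0` and leaves `1, 2, 3`. -/
def claw : SimpleGraph (Fin 4) :=
  SimpleGraph.fromRel (fun i _ => i = 0)

/-- `2K₂`: two disjoint edges. -/
def twoK2 : SimpleGraph (Fin 2 × Fin 2) :=
  SimpleGraph.fromRel (fun x y => x.1 = y.1)

/-- The path `P₄` on four vertices `0 - 1 - 2 - 3`. -/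
def path4 : SimpleGraph (Fin 4) :=
  SimpleGraph.fromRel (fun i j => (j : ℕ) = (i : ℕ) + 1)


/-!
Claw-freeness and the two saturation conditions say: every edge `uw` has a common neighbour `x`
with a neighbour `y` adjacent to neither `u` nor `w` (deleting `uw` creates the claw `x; u, w, y`),
and for every non-edge `uw` one of `u, w` has two non-adjacent neighbours, both non-adjacent to the
other (adding `uw` creates a claw).

When every vertex of `N[v]` has degree 4, the first condition applied to the edges `vt` shows that
`N(v)` induces a graph without isolated vertices. A vertex `a ∈ N(v)` adjacent to the rest of
`N(v)` would satisfy `N[a] = N[v]`; the first condition on an edge `at` then yields a vertex of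
`N(v)` whose only neighbours in `N(v)` are `a` and `t`, and this cannot happen for all three
choices of `t`. If `N(v)` induced a 4-cycle `abcd`, the fourth neighbour `x` of `a` lies outside
`N[v]` and, by claw-freeness at `a`, is adjacent to `b` or `d`; the second condition on the
non-edge `vx` then produces a claw. A graph on four vertices with all degrees in `{1, 2}` and no
induced 4-cycle is `2K₂` or `P₄`.
-/

section Development

variable {V : Type*} {G : SimpleGraph V}

theorem claw_adj {i j : Fin 4} : claw.Adj i j ↔ i ≠ j ∧ (i = 0 ∨ j = 0) := by
  simp [claw]

theorem hasInducedCopy_claw_iff :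
    HasInducedCopy claw G ↔ ∃ x a b c, G.Adj x a ∧ G.Adj x b ∧ G.Adj x c ∧
      a ≠ b ∧ a ≠ c ∧ b ≠ c ∧ ¬G.Adj a b ∧ ¬G.Adj a c ∧ ¬G.Adj b c := by
  constructor
  · rintro ⟨f⟩
    refine ⟨f 0, f 1, f 2, f 3, ?_⟩
    simp only [f.map_adj_iff, claw_adj, ne_eq, f.injective.eq_iff]
    decide
  · rintro ⟨x, a, b, c, hxa, hxb, hxc, hab, hac, hbc, nab, nac, nbc⟩
    refine ⟨⟨⟨![x, a, b, c], fun i j ↦ ?_⟩, fun {i j} ↦ ?_⟩⟩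
    · fin_cases i <;> fin_cases j <;>
        simp [hxa.ne, hxb.ne, hxc.ne, hxa.ne', hxb.ne', hxc.ne', hab, hac, hbc, hab.symm,
          hac.symm, hbc.symm]
    · change G.Adj (![x, a, b, c] i) (![x, a, b, c] j) ↔ _
      fin_cases i <;> fin_cases j <;>
        simp [claw_adj, hxa, hxb, hxc, nab, nac, nbc, hxa.symm, hxb.symm, hxc.symm,
          G.adj_comm b a, G.adj_comm c a, G.adj_comm c b]

theorem adj_or_adj_or_adj_of_not_hasInducedCopy_claw (h : ¬HasInducedCopy claw G) {x a b c : V}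
    (hxa : G.Adj x a) (hxb : G.Adj x b) (hxc : G.Adj x c) (hab : a ≠ b) (hac : a ≠ c)
    (hbc : b ≠ c) : G.Adj a b ∨ G.Adj a c ∨ G.Adj b c := by
  by_contra! hne
  exact h (hasInducedCopy_claw_iff.mpr ⟨x, a, b, c, hxa, hxb, hxc, hab, hac, hbc, hne⟩)

theorem exists_adj_of_hasInducedCopy_claw_deleteEdges (h : ¬HasInducedCopy claw G) {u w : V}
    (hdel : HasInducedCopy claw (G.deleteEdges {s(u, w)})) :
    ∃ x y, G.Adj x u ∧ G.Adj x w ∧ G.Adj x y ∧ ¬G.Adj u y ∧ ¬G.Adj w y := by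
  obtain ⟨x, a, b, c, hxa, hxb, hxc, hab, hac, hbc, nab, nac, nbc⟩ :=
    hasInducedCopy_claw_iff.mp hdel
  replace hxa := deleteEdges_le _ hxa
  replace hxb := deleteEdges_le _ hxb
  replace hxc := deleteEdges_le _ hxc
  simp only [deleteEdges_adj, Set.mem_singleton_iff, not_and, not_not] at nab nac nbc
  -- the deleted edge joins two leaves of the claw
  wlog hab' : G.Adj a b generalizing a b c
  · have swap {p q : V} (hpq : G.Adj p q → s(p, q) = s(u, w)) : G.Adj q p → s(q, p) = s(u, w) :=
      fun h ↦ Sym2.eq_swap.trans (hpq h.symm)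
    rcases adj_or_adj_or_adj_of_not_hasInducedCopy_claw h hxa hxb hxc hab hac hbc with
      h' | h' | h'
    · exact absurd h' hab'
    · exact this a c b hac hab hbc.symm hxa hxc hxb nac nab (swap nbc) h'
    · exact this b c a hbc hab.symm hac.symm hxb hxc hxa nbc (swap nab) (swap nac) h'
  have he := nab hab'
  have hac' : ¬G.Adj a c := fun h ↦ hbc (Sym2.congr_right.mp ((nac h).trans he.symm)).symm
  have hbc' : ¬G.Adj b c := fun h ↦
    hac (Sym2.congr_right.mp ((nbc h).trans (he.symm.trans Sym2.eq_swap))).symm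
  rcases Sym2.eq_iff.mp he with ⟨rfl, rfl⟩ | ⟨rfl, rfl⟩
  · exact ⟨x, c, hxa, hxb, hxc, hac', hbc'⟩
  · exact ⟨x, c, hxb, hxa, hxc, hbc', hac'⟩

theorem exists_adj_of_hasInducedCopy_claw_sup_edge (h : ¬HasInducedCopy claw G) {u w : V}
    (hadd : HasInducedCopy claw (G ⊔ fromEdgeSet {s(u, w)})) :
    (∃ p q, p ≠ q ∧ G.Adj u p ∧ G.Adj u q ∧ ¬G.Adj p q ∧ ¬G.Adj w p ∧ ¬G.Adj w q) ∨
      (∃ p q, p ≠ q ∧ G.Adj w p ∧ G.Adj w q ∧ ¬G.Adj p q ∧ ¬G.Adj u p ∧ ¬G.Adj u q) := by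
  obtain ⟨x, a, b, c, hxa, hxb, hxc, hab, hac, hbc, nab, nac, nbc⟩ :=
    hasInducedCopy_claw_iff.mp hadd
  replace nab : ¬G.Adj a b := nab ∘ Or.inl
  replace nac : ¬G.Adj a c := nac ∘ Or.inl
  replace nbc : ¬G.Adj b c := nbc ∘ Or.inl
  simp only [sup_adj, fromEdgeSet_adj, Set.mem_singleton_iff] at hxa hxb hxc
  -- the added edge joins the centre of the claw to a leaf
  wlog hxa' : ¬G.Adj x a generalizing a b c
  · by_cases hxb' : G.Adj x b
    · by_cases hxc' : G.Adj x c
      · exact absurd (hasInducedCopy_claw_iff.mpr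
          ⟨x, a, b, c, not_not.mp hxa', hxb', hxc', hab, hac, hbc, nab, nac, nbc⟩) h
      · exact this c a b hac.symm hbc.symm hab (fun h ↦ nac h.symm) (fun h ↦ nbc h.symm) nab
          hxc hxa hxb hxc'
    · exact this b a c hab.symm hbc hac (fun h ↦ nab h.symm) nbc nac hxb hxa hxc hxb'
  have he := (hxa.resolve_left hxa').1
  have hxb' : G.Adj x b :=
    hxb.resolve_right fun h ↦ hab (Sym2.congr_right.mp (he.trans h.1.symm))
  have hxc' : G.Adj x c :=
    hxc.resolve_right fun h ↦ hac (Sym2.congr_right.mp (he.trans h.1.symm))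
  rcases Sym2.eq_iff.mp he with ⟨rfl, rfl⟩ | ⟨rfl, rfl⟩
  · exact .inl ⟨b, c, hbc, hxb', hxc', nbc, nab, nac⟩
  · exact .inr ⟨b, c, hbc, hxb', hxc', nbc, nab, nac⟩

section Degree

variable [Fintype V] [DecidableRel G.Adj] {u : V}

theorem exists_adj_notMem_of_card_lt_degree {s : Finset V} (h : s.card < G.degree u) :
    ∃ t, G.Adj u t ∧ t ∉ s := by
  simpa using Finset.exists_mem_notMem_of_card_lt_card
    (h.trans_eq (G.card_neighborFinset_eq_degree u).symm)

theorem eq_or_eq_or_eq_or_eq_of_degree_eq_four {p q r s t : V} (hu : G.degree u = 4)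
    (hp : G.Adj u p) (hq : G.Adj u q) (hr : G.Adj u r) (hs : G.Adj u s)
    (hpq : p ≠ q) (hpr : p ≠ r) (hps : p ≠ s) (hqr : q ≠ r) (hqs : q ≠ s) (hrs : r ≠ s)
    (ht : G.Adj u t) : t = p ∨ t = q ∨ t = r ∨ t = s := by
  classical
  have hsub : {p, q, r, s} ⊆ G.neighborFinset u := by
    simp [Finset.insert_subset_iff, hp, hq, hr, hs]
  have hcard : ({p, q, r, s} : Finset V).card = 4 := by
    simp [Finset.card_insert_of_notMem, hpq, hpr, hps, hqr, hqs, hrs]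
  have heq := Finset.eq_of_subset_of_card_le hsub
    (by rw [card_neighborFinset_eq_degree, hu, hcard])
  simpa [← heq] using (G.mem_neighborFinset u t).mpr ht

end Degree

section FourVertices

variable {W : Type*} {H : SimpleGraph W} {a b c d : W}

theorem nonempty_iso_path4 (hW : ∀ x, x = a ∨ x = b ∨ x = c ∨ x = d)
    (hab : H.Adj a b) (hbc : H.Adj b c) (hcd : H.Adj c d)
    (hac : ¬H.Adj a c) (had : ¬H.Adj a d) (hbd : ¬H.Adj b d) : Nonempty (H ≃g path4) := by
  have hac' : a ≠ c := by rintro rfl; exact had hcd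
  have had' : a ≠ d := by rintro rfl; exact hac hcd.symm
  have hbd' : b ≠ d := by rintro rfl; exact had hab
  refine ⟨(RelIso.ofSurjective ⟨⟨![a, b, c, d], fun i j ↦ ?_⟩, fun {i j} ↦ ?_⟩
    fun x ↦ ?_).symm⟩
  · fin_cases i <;> fin_cases j <;>
      simp [hab.ne, hbc.ne, hcd.ne, hab.ne', hbc.ne', hcd.ne', hac', had', hbd', hac'.symm,
        had'.symm, hbd'.symm]
  · change H.Adj (![a, b, c, d] i) (![a, b, c, d] j) ↔ _
    fin_cases i <;> fin_cases j <;>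
      simp [path4, hab, hbc, hcd, hac, had, hbd, hab.symm, hbc.symm, hcd.symm, H.adj_comm c a,
        H.adj_comm d a, H.adj_comm d b]
  · rcases hW x with rfl | rfl | rfl | rfl
    exacts [⟨0, rfl⟩, ⟨1, rfl⟩, ⟨2, rfl⟩, ⟨3, rfl⟩]

theorem nonempty_iso_twoK2 (hW : ∀ x, x = a ∨ x = b ∨ x = c ∨ x = d)
    (hab : H.Adj a b) (hcd : H.Adj c d)
    (hac : ¬H.Adj a c) (had : ¬H.Adj a d) (hbc : ¬H.Adj b c) (hbd : ¬H.Adj b d) :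
    Nonempty (H ≃g twoK2) := by
  have hac' : a ≠ c := by rintro rfl; exact had hcd
  have had' : a ≠ d := by rintro rfl; exact hac hcd.symm
  have hbc' : b ≠ c := by rintro rfl; exact hbd hcd
  have hbd' : b ≠ d := by rintro rfl; exact hbc hcd.symm
  refine ⟨(RelIso.ofSurjective
    ⟨⟨fun i ↦ ![![a, b], ![c, d]] i.1 i.2, fun i j ↦ ?_⟩, fun {i j} ↦ ?_⟩ fun x ↦ ?_).symm⟩
  · fin_cases i <;> fin_cases j <;>
      simp [hab.ne, hcd.ne, hab.ne', hcd.ne', hac', had', hbc', hbd', hac'.symm,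
        had'.symm, hbc'.symm, hbd'.symm]
  · change H.Adj (![![a, b], ![c, d]] i.1 i.2) (![![a, b], ![c, d]] j.1 j.2) ↔ _
    fin_cases i <;> fin_cases j <;>
      simp [twoK2, hab, hcd, hac, had, hbc, hbd, hab.symm, hcd.symm, H.adj_comm c a,
        H.adj_comm d a, H.adj_comm c b, H.adj_comm d b]
  · rcases hW x with rfl | rfl | rfl | rfl
    exacts [⟨(0, 0), rfl⟩, ⟨(0, 1), rfl⟩, ⟨(1, 0), rfl⟩, ⟨(1, 1), rfl⟩]

variable [Fintype W]

theorem exists_forall_eq_or_of_card_eq_four (hcard : Fintype.card W = 4)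
    (hab : a ≠ b) (hac : a ≠ c) (hbc : b ≠ c) :
    ∃ d, d ≠ a ∧ d ≠ b ∧ d ≠ c ∧ ∀ x, x = a ∨ x = b ∨ x = c ∨ x = d := by
  classical
  obtain ⟨d, -, hd⟩ := Finset.exists_mem_notMem_of_card_lt_card (s := {a, b, c})
    (t := Finset.univ) (Finset.card_le_three.trans_lt (by simp [hcard]))
  simp only [Finset.mem_insert, Finset.mem_singleton, not_or] at hd
  obtain ⟨hda, hdb, hdc⟩ := hd
  have huniv := Finset.eq_univ_of_card {a, b, c, d} (by
    simp [Finset.card_insert_of_notMem, hab, hac, hbc, Ne.symm hda, Ne.symm hdb, Ne.symm hdc,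
      hcard])
  refine ⟨d, hda, hdb, hdc, fun x ↦ ?_⟩
  have hx : x ∈ ({a, b, c, d} : Finset W) := by simp [huniv]
  simpa using hx

variable (hcard : Fintype.card W = 4) (hiso : ∀ x, ∃ y, H.Adj x y)
  (hdom : ∀ x, ∃ y, x ≠ y ∧ ¬H.Adj x y)
  (hC4 : ∀ a b c d, H.Adj a b → H.Adj b c → H.Adj c d → H.Adj d a → a ≠ c → b ≠ d →
    H.Adj a c ∨ H.Adj b d)
include hcard hiso hdom hC4

theorem exists_adj_forall_adj_eq : ∃ a b, H.Adj a b ∧ ∀ y, H.Adj a y → y = b := by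
  by_contra! hno
  have : Nonempty W := Fintype.card_pos_iff.mp (by omega)
  obtain a := Classical.arbitrary W
  obtain ⟨b, hab⟩ := hiso a
  obtain ⟨c, hac, hcb⟩ := hno a b hab
  obtain ⟨d, hda, hdb, hdc, hW⟩ :=
    exists_forall_eq_or_of_card_eq_four hcard hab.ne hac.ne (Ne.symm hcb)
  have had : ¬H.Adj a d := by
    obtain ⟨g, hag, hng⟩ := hdom a
    rcases hW g with rfl | rfl | rfl | rfl
    exacts [(hag rfl).elim, (hng hab).elim, (hng hac).elim, hng]
  have hNd e (hde : H.Adj d e) : e = b ∨ e = c := by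
    rcases hW e with rfl | rfl | rfl | rfl
    exacts [absurd hde.symm had, .inl rfl, .inr rfl, (hde.ne rfl).elim]
  obtain ⟨e, hde⟩ := hiso d
  obtain ⟨f, hdf, hfe⟩ := hno d e hde
  have hdbc : H.Adj d b ∧ H.Adj d c := by
    rcases hNd e hde with rfl | rfl <;> rcases hNd f hdf with rfl | rfl
    exacts [(hfe rfl).elim, ⟨hde, hdf⟩, ⟨hdf, hde⟩, (hfe rfl).elim]
  have hbc : ¬H.Adj b c := by
    obtain ⟨g, hbg, hng⟩ := hdom b
    rcases hW g with rfl | rfl | rfl | rfl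
    exacts [(hng hab.symm).elim, (hbg rfl).elim, hng, (hng hdbc.1.symm).elim]
  rcases hC4 a b d c hab hdbc.1.symm hdbc.2 hac.symm (Ne.symm hda) (Ne.symm hcb) with h | h
  exacts [had h, hbc h]

theorem nonempty_iso_twoK2_or_path4 : Nonempty (H ≃g twoK2) ∨ Nonempty (H ≃g path4) := by
  obtain ⟨a, b, hab, hb⟩ := exists_adj_forall_adj_eq hcard hiso hdom hC4
  obtain ⟨c, hac', hac⟩ := hdom a
  have hcb : c ≠ b := by rintro rfl; exact hac hab
  obtain ⟨d, hda, hdb, hdc, hW⟩ :=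
    exists_forall_eq_or_of_card_eq_four hcard hab.ne hac' (Ne.symm hcb)
  have had : ¬H.Adj a d := fun h ↦ hdb (hb d h)
  have hb' : ¬(H.Adj b c ∧ H.Adj b d) := by
    rintro ⟨hbc, hbd⟩
    obtain ⟨g, hbg, hng⟩ := hdom b
    rcases hW g with rfl | rfl | rfl | rfl
    exacts [hng hab.symm, hbg rfl, hng hbc, hng hbd]
  by_cases hcd : H.Adj c d
  · by_cases hbc : H.Adj b c <;> by_cases hbd : H.Adj b d
    · exact absurd ⟨hbc, hbd⟩ hb'
    · exact .inr (nonempty_iso_path4 hW hab hbc hcd hac had hbd)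
    · exact .inr (nonempty_iso_path4 (fun x ↦ by have := hW x; tauto)
        hab hbd hcd.symm had hac hbc)
    · exact .inl (nonempty_iso_twoK2 hW hab hcd hac had hbc hbd)
  · have hbc : H.Adj b c := by
      obtain ⟨e, hce⟩ := hiso c
      rcases hW e with rfl | rfl | rfl | rfl
      exacts [absurd hce.symm hac, hce.symm, (hce.ne rfl).elim, absurd hce hcd]
    have hbd : H.Adj b d := by
      obtain ⟨e, hde⟩ := hiso d
      rcases hW e with rfl | rfl | rfl | rfl
      exacts [absurd hde.symm had, hde.symm, absurd hde.symm hcd, (hde.ne rfl).elim]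
    exact absurd ⟨hbc, hbd⟩ hb'

end FourVertices

namespace IsIndSat

variable (hG : IsIndSat G claw)
include hG

theorem adj_or_adj_or_adj {x a b c : V} (hxa : G.Adj x a) (hxb : G.Adj x b) (hxc : G.Adj x c)
    (hab : a ≠ b) (hac : a ≠ c) (hbc : b ≠ c) : G.Adj a b ∨ G.Adj a c ∨ G.Adj b c :=
  adj_or_adj_or_adj_of_not_hasInducedCopy_claw hG.1 hxa hxb hxc hab hac hbc

theorem exists_paw {u w : V} (huw : G.Adj u w) :
    ∃ x y, G.Adj x u ∧ G.Adj x w ∧ G.Adj x y ∧ ¬G.Adj u y ∧ ¬G.Adj w y :=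
  exists_adj_of_hasInducedCopy_claw_deleteEdges hG.1 (hG.2.1 u w huw)

theorem exists_indep_neighbors_of_not_adj {u w : V} (hne : u ≠ w) (huw : ¬G.Adj u w) :
    (∃ p q, p ≠ q ∧ G.Adj u p ∧ G.Adj u q ∧ ¬G.Adj p q ∧ ¬G.Adj w p ∧ ¬G.Adj w q) ∨
      (∃ p q, p ≠ q ∧ G.Adj w p ∧ G.Adj w q ∧ ¬G.Adj p q ∧ ¬G.Adj u p ∧ ¬G.Adj u q) :=
  exists_adj_of_hasInducedCopy_claw_sup_edge hG.1 (hG.2.2 u w hne huw)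

variable [Fintype V] [DecidableRel G.Adj] {v a : V}

theorem exists_adj_of_closed_twin (hdeg : ∀ u, G.Adj v u → G.degree u = 4) (hva : G.Adj v a)
    (hNa : ∀ s, G.Adj a s → s = v ∨ G.Adj v s) (hdom : ∀ s, G.Adj v s → s ≠ a → G.Adj a s)
    {t : V} (hvt : G.Adj v t) (hta : t ≠ a) :
    ∃ x, G.Adj v x ∧ x ≠ a ∧ G.Adj x t ∧ ∀ s, G.Adj v s → G.Adj x s → s = a ∨ s = t := by
  have hat := hdom t hvt hta
  obtain ⟨x, y, hxa, hxt, hxy, hay, hty⟩ := hG.exists_paw hat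
  have hya : y ≠ a := by rintro rfl; exact hty hat.symm
  have hvy : ¬G.Adj v y := fun h ↦ hay (hdom y h hya)
  have hvx : G.Adj v x := (hNa x hxa.symm).resolve_left (by rintro rfl; exact hvy hxy)
  refine ⟨x, hvx, hxa.ne, hxt, fun s hvs hxs ↦ ?_⟩
  rcases eq_or_eq_or_eq_or_eq_of_degree_eq_four (hdeg x hvx) hvx.symm hxa hxt hxy hva.ne hvt.ne
    (by rintro rfl; exact hay hva.symm) hat.ne hya.symm (by rintro rfl; exact hay hat) hxs with
    rfl | rfl | rfl | rfl
  · exact (hvs.ne rfl).elim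
  · exact .inl rfl
  · exact .inr rfl
  · exact absurd hvs hvy

theorem exists_not_adj_of_adj (hdeg : ∀ u, G.Adj v u → G.degree u = 4) (hv : G.degree v = 4)
    (hva : G.Adj v a) : ∃ t, G.Adj v t ∧ t ≠ a ∧ ¬G.Adj a t := by
  classical
  by_contra! hdom
  obtain ⟨b, hvb, hb⟩ :=
    exists_adj_notMem_of_card_lt_degree (G := G) (u := v) (s := {a}) (by simp [hv])
  obtain ⟨c, hvc, hc⟩ := exists_adj_notMem_of_card_lt_degree (G := G) (u := v) (s := {a, b})
    (Finset.card_le_two.trans_lt (by omega))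
  obtain ⟨d, hvd, hd⟩ := exists_adj_notMem_of_card_lt_degree (G := G) (u := v) (s := {a, b, c})
    (Finset.card_le_three.trans_lt (by omega))
  simp only [Finset.mem_insert, Finset.mem_singleton, not_or] at hb hc hd
  obtain ⟨hca, hcb⟩ := hc
  obtain ⟨hda, hdb, hdc⟩ := hd
  have hNv t := eq_or_eq_or_eq_or_eq_of_degree_eq_four hv hva hvb hvc hvd (Ne.symm hb)
    (Ne.symm hca) (Ne.symm hda) (Ne.symm hcb) (Ne.symm hdb) (Ne.symm hdc) (t := t)
  have hab := hdom b hvb hb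
  have hac := hdom c hvc hca
  have had := hdom d hvd hda
  have hNa s (has : G.Adj a s) : s = v ∨ G.Adj v s := by
    rcases eq_or_eq_or_eq_or_eq_of_degree_eq_four (hdeg a hva) hva.symm hab hac had hvb.ne
      hvc.ne hvd.ne (Ne.symm hcb) (Ne.symm hdb) (Ne.symm hdc) has with rfl | rfl | rfl | rfl
    exacts [.inl rfl, .inr hvb, .inr hvc, .inr hvd]
  have twin {t} (hvt : G.Adj v t) (hta : t ≠ a) :=
    hG.exists_adj_of_closed_twin hdeg hva hNa hdom hvt hta
  obtain ⟨x, hvx, hxa, hxb, hx⟩ := twin hvb hb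
  rcases hNv x hvx with rfl | rfl | rfl | rfl
  · exact hxa rfl
  · exact hxb.ne rfl
  · obtain ⟨y, hvy, hya, hyd, hy⟩ := twin hvd hda
    rcases hNv y hvy with rfl | rfl | rfl | rfl
    · exact hya rfl
    · rcases hy _ hvx hxb.symm with h | h
      exacts [hca h, hdc h.symm]
    · rcases hx _ hvd hyd with h | h
      exacts [hda h, hdb h]
    · exact hyd.ne rfl
  · obtain ⟨y, hvy, hya, hyc, hy⟩ := twin hvc hca
    rcases hNv y hvy with rfl | rfl | rfl | rfl
    · exact hya rfl
    · rcases hy _ hvx hxb.symm with h | h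
      exacts [hda h, hdc h]
    · exact hyc.ne rfl
    · rcases hx _ hvc hyc with h | h
      exacts [hca h, hcb h]

theorem adj_or_adj_of_cycle {b c d : V} (hv : G.degree v = 4) (ha : G.degree a = 4)
    (hva : G.Adj v a) (hvb : G.Adj v b) (hvc : G.Adj v c) (hvd : G.Adj v d)
    (hab : G.Adj a b) (hbc : G.Adj b c) (hcd : G.Adj c d) (hda : G.Adj d a)
    (hac : a ≠ c) (hbd : b ≠ d) : G.Adj a c ∨ G.Adj b d := by
  classical
  by_contra! h
  obtain ⟨nac, nbd⟩ := h
  have hNv t := eq_or_eq_or_eq_or_eq_of_degree_eq_four hv hva hvb hvc hvd hab.ne hac hda.ne'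
    hbc.ne hbd hcd.ne (t := t)
  obtain ⟨x, hax, hx⟩ := exists_adj_notMem_of_card_lt_degree (G := G) (u := a) (s := {v, b, d})
    (Finset.card_le_three.trans_lt (by omega))
  simp only [Finset.mem_insert, Finset.mem_singleton, not_or] at hx
  obtain ⟨hxv, hxb, hxd⟩ := hx
  have hNa t := eq_or_eq_or_eq_or_eq_of_degree_eq_four ha hva.symm hab hda.symm hax hvb.ne hvd.ne
    (Ne.symm hxv) hbd (Ne.symm hxb) (Ne.symm hxd) (t := t)
  have hvx : ¬G.Adj v x := fun h ↦ by
    rcases hNv x h with rfl | rfl | rfl | rfl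
    exacts [hax.ne rfl, hxb rfl, nac hax, hxd rfl]
  have hxbd : G.Adj x b ∨ G.Adj x d := by
    rcases hG.adj_or_adj_or_adj hab hda.symm hax hbd (Ne.symm hxb) (Ne.symm hxd) with h | h | h
    exacts [absurd h nbd, .inl h.symm, .inr h.symm]
  rcases hG.exists_indep_neighbors_of_not_adj (Ne.symm hxv) hvx with
    ⟨p, q, hpq, hvp, hvq, npq, nxp, nxq⟩ | ⟨p, q, hpq, hxp, hxq, npq, nvp, nvq⟩
  · -- `p, q ≠ a` as `x ~ a`, and the only non-edge among `b, c, d` is `bd`, excluded by `hxbd`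
    have := hax.symm
    have := hbc.symm
    have := hcd.symm
    rcases hNv p hvp with rfl | rfl | rfl | rfl <;> rcases hNv q hvq with rfl | rfl | rfl | rfl <;>
      tauto
  · have leaf p (hxp : G.Adj x p) (nvp : ¬G.Adj v p) : a ≠ p ∧ ¬G.Adj a p := by
      refine ⟨by rintro rfl; exact nvp hva, fun hap ↦ ?_⟩
      rcases hNa p hap with rfl | rfl | rfl | rfl
      exacts [hvx hxp.symm, nvp hvb, nvp hvd, hxp.ne rfl]
    obtain ⟨hap, nap⟩ := leaf p hxp nvp
    obtain ⟨haq, naq⟩ := leaf q hxq nvq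
    rcases hG.adj_or_adj_or_adj hax.symm hxp hxq hap haq hpq with h | h | h
    exacts [nap h, naq h, npq h]

end IsIndSat

end Development

/-- If `G` is claw-induced-saturated and every vertex in the closed
neighborhood of `v` has degree exactly 4, then `N(v)` induces `2K₂` or `P₄`. -/
theorem claw_indSat_neighborhood_structure {V : Type*} [Fintype V] (G : SimpleGraph V)
    [DecidableRel G.Adj] (h : IsIndSat G claw) (v : V)
    (hdeg : ∀ u : V, u ∈ insert v (G.neighborSet v) → G.degree u = 4) :
    Nonempty ((G.induce (G.neighborSet v)) ≃g twoK2) ∨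
    Nonempty ((G.induce (G.neighborSet v)) ≃g path4) := by
  have hv : G.degree v = 4 := hdeg v (Set.mem_insert _ _)
  have hnbr u (hu : G.Adj v u) : G.degree u = 4 := hdeg u (Set.mem_insert_of_mem _ hu)
  apply nonempty_iso_twoK2_or_path4
  · exact (G.card_neighborSet_eq_degree v).trans hv
  · rintro ⟨t, ht⟩
    obtain ⟨x, -, hxv, hxt, -⟩ := h.exists_paw ht
    exact ⟨⟨x, hxv.symm⟩, hxt.symm⟩
  · rintro ⟨t, ht⟩
    obtain ⟨s, hvs, hst, hts⟩ := h.exists_not_adj_of_adj hnbr hv ht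
    exact ⟨⟨s, hvs⟩, fun e ↦ hst (congrArg Subtype.val e).symm, hts⟩
  · rintro ⟨a, ha⟩ ⟨b, hb⟩ ⟨c, hc⟩ ⟨d, hd⟩ hab hbc hcd hda hac hbd
    exact h.adj_or_adj_of_cycle hv (hnbr a ha) ha hb hc hd hab hbc hcd hda
      (fun e ↦ hac (Subtype.ext e)) (fun e ↦ hbd (Subtype.ext e))
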